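/- arXiv:2105.02867 — 7 statements merged into one kernel-verified Lean document; each statement's English description precedes it below -/
import Mathlib

section
/- Solving the ring recursion Δ_{S_j} = (λ_e + j(λ_c/k)Δ_c + λ Δ_{S_{j+1}})/(j λ_c/k + λ) for j = 1,…,k−1 with boundary value Δ_{S_k} yields Δ_{S_1} = (λ_e/λ)·Σ_{i=1}^{k−1} b_i^{(k)} + Δ_c·(1 − b_{k−1}^{(k)}) + Δ_{S_k}·b_{k−1}^{(k)}, where b_i^{(k)} = Π_{j=1}^{i} k/(k + j λ_c/λ). -/
/-!
Writing `β j = k / (k + j λc/λ)`, the recursion says `Δ_{S_j} - Δc = β j (λe/λ + (Δ_{S_{j+1}} - Δc))`,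
a backward affine recursion for `Δ_{S_j} - Δc` whose solution is a sum of the partial products `b_i`.
-/

open Finset

theorem eq_sum_prod_add_prod_mul_of_eq_mul_add {R : Type*} [CommSemiring R]
    (β y : ℕ → R) (e : R) {m n : ℕ} (hmn : m ≤ n)
    (hy : ∀ j, m ≤ j → j ≤ n → y j = β j * (e + y (j + 1))) :
    y m = e * ∑ i ∈ Icc m n, ∏ j ∈ Icc m i, β j + (∏ j ∈ Icc m n, β j) * y (n + 1) := by
  induction n, hmn using Nat.le_induction with
  | base =>
    rw [hy m le_rfl le_rfl]
    simp only [Icc_self, sum_singleton, prod_singleton]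
    ring
  | succ n hmn ih =>
    rw [ih fun j hmj hjn => hy j hmj (by omega), hy (n + 1) (by omega) le_rfl,
      sum_Icc_succ_top (by omega), prod_Icc_succ_top (by omega)]
    ring

theorem sub_eq_mul_of_eq_div {k j lamE lamC lam Δc x y : ℝ} (hk : k ≠ 0) (hl : lam ≠ 0)
    (hden : k * lam + j * lamC ≠ 0)
    (h : x = (lamE + j * (lamC / k) * Δc + lam * y) / (j * lamC / k + lam)) :
    x - Δc = k / (k + j * lamC / lam) * (lamE / lam + (y - Δc)) := by
  have h1 : j * lamC / k + lam = (k * lam + j * lamC) / k := by field_simp; ring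
  have h2 : k + j * lamC / lam = (k * lam + j * lamC) / lam := by field_simp
  rw [h, h1, h2]
  field_simp
  ring

theorem stmt_4_general (k : ℕ) (hk : 2 ≤ k) (lamE lamC lam Δc : ℝ)
    (hC : 0 < lamC) (hl : 0 < lam)
    (Δ : ℕ → ℝ)
    (hrec : ∀ j, 1 ≤ j → j ≤ k - 1 →
      Δ j = (lamE + (j : ℝ) * (lamC / k) * Δc + lam * Δ (j + 1))
        / ((j : ℝ) * lamC / k + lam)) :
    Δ 1 = (lamE / lam) *
        (∑ i ∈ Finset.Icc 1 (k - 1), ∏ j ∈ Finset.Icc 1 i, (k : ℝ) / (k + j * lamC / lam))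
      + Δc * (1 - ∏ j ∈ Finset.Icc 1 (k - 1), (k : ℝ) / (k + j * lamC / lam))
      + Δ k * ∏ j ∈ Finset.Icc 1 (k - 1), (k : ℝ) / (k + j * lamC / lam) := by
  have hkpos : (0 : ℝ) < k := by exact_mod_cast (by omega : 0 < k)
  have hsolved := eq_sum_prod_add_prod_mul_of_eq_mul_add
    (fun j => (k : ℝ) / (k + j * lamC / lam)) (fun j => Δ j - Δc) (lamE / lam)
    (by omega : 1 ≤ k - 1) fun j hj hjk =>
      sub_eq_mul_of_eq_div hkpos.ne' hl.ne' (by positivity) (hrec j hj hjk)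
  rw [Nat.sub_add_cancel (by omega : 1 ≤ k)] at hsolved
  linear_combination hsolved

/-- Solving the clustered ring recursion backwards from `Δ_{S_k}` yields the
closed form `Δ_{S_1} = (λe/λ)·Σ_{i=1}^{k-1} b_i + Δc·(1 − b_{k-1}) + Δ_{S_k}·b_{k-1}`
with `b_i = Π_{j=1}^{i} k/(k + jλc/λ)`. -/
theorem stmt_4 (k : ℕ) (hk : 2 ≤ k) (lamE lamC lam Δc : ℝ)
    (hE : 0 < lamE) (hC : 0 < lamC) (hl : 0 < lam)
    (Δ : ℕ → ℝ)
    (hrec : ∀ j, 1 ≤ j → j ≤ k - 1 →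
      Δ j = (lamE + (j : ℝ) * (lamC / k) * Δc + lam * Δ (j + 1))
        / ((j : ℝ) * lamC / k + lam)) :
    Δ 1 = (lamE / lam) *
        (∑ i ∈ Finset.Icc 1 (k - 1), ∏ j ∈ Finset.Icc 1 i, (k : ℝ) / (k + j * lamC / lam))
      + Δc * (1 - ∏ j ∈ Finset.Icc 1 (k - 1), (k : ℝ) / (k + j * lamC / lam))
      + Δ k * ∏ j ∈ Finset.Icc 1 (k - 1), (k : ℝ) / (k + j * lamC / lam) :=
  stmt_4_general k hk lamE lamC lam Δc hC hl Δ hrec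
end

section
/- Define a_i^{(n)} = Π_{j=1}^{i} n/(n+j) for 1 ≤ i ≤ n−1. Then (1/√n)·Σ_{i=1}^{n−1} a_i^{(n)} converges to √(π/2) as n → ∞. -/
/-!
With `F_n = ∑_{i=1}^{n-1} a_i^{(n)} 𝟙_{((i-1)/√n, i/√n]}`, the normalized sum is `∫ F_n`.
Comparing `log (n/(n+j))` with `-j/n` and `-j/(n+i)` gives
`exp (-i(i+1)/(2n)) ≤ a_i^{(n)} ≤ exp (-i(i+1)/(2(n+i)))`, hence `F_n(t) → exp (-t²/2)` for
`t > 0` and `F_n(t) ≤ exp (-t²/4)`. Dominated convergence turns `∫ F_n` into the half-line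
Gaussian integral `√(π/2)`.
-/

open Filter MeasureTheory Set Topology Real

namespace GossipAge

noncomputable def stepFun (s : ℝ) (m : ℕ) (c : ℕ → ℝ) (t : ℝ) : ℝ :=
  ∑ i ∈ Finset.Icc 1 m, (Ioc (((i : ℝ) - 1) / s) (i / s)).indicator (fun _ => c i) t

section stepFun

variable {s t : ℝ} {m : ℕ} {c : ℕ → ℝ}

theorem measurable_stepFun : Measurable (stepFun s m c) :=
  Finset.measurable_sum _ fun _ _ => measurable_const.indicator measurableSet_Ioc

theorem integral_stepFun (hs : 0 ≤ s) :
    ∫ t, stepFun s m c t = 1 / s * ∑ i ∈ Finset.Icc 1 m, c i := by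
  have hint : ∀ i ∈ Finset.Icc 1 m,
      Integrable ((Ioc (((i : ℝ) - 1) / s) (i / s)).indicator fun _ => c i) :=
    fun i _ => (integrable_indicator_iff measurableSet_Ioc).2
      (integrableOn_const measure_Ioc_lt_top.ne)
  unfold stepFun
  rw [integral_finsetSum _ hint, Finset.mul_sum]
  refine Finset.sum_congr rfl fun i _ => ?_
  rw [integral_indicator_const _ measurableSet_Ioc, measureReal_def, Real.volume_Ioc,
    ← sub_div, sub_sub_cancel, ENNReal.toReal_ofReal (by positivity), smul_eq_mul]

theorem stepFun_of_nonpos (hs : 0 ≤ s) (ht : t ≤ 0) : stepFun s m c t = 0 := by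
  refine Finset.sum_eq_zero fun i hi => indicator_of_notMem (fun hmem => ?_) _
  have hi : (1 : ℝ) ≤ i := by exact_mod_cast (Finset.mem_Icc.1 hi).1
  have : 0 ≤ ((i : ℝ) - 1) / s := div_nonneg (by linarith) hs
  linarith [hmem.1]

theorem mem_Ioc_div_iff_ceil_eq (hs : 0 < s) {i : ℕ} (hi : 1 ≤ i) :
    t ∈ Ioc (((i : ℝ) - 1) / s) (i / s) ↔ ⌈t * s⌉₊ = i := by
  rw [mem_Ioc, div_lt_iff₀ hs, le_div_iff₀ hs, Nat.ceil_eq_iff (by omega), Nat.cast_sub hi,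
    Nat.cast_one]

theorem stepFun_of_pos (hs : 0 < s) (ht : 0 < t) :
    stepFun s m c t = if ⌈t * s⌉₊ ≤ m then c ⌈t * s⌉₊ else 0 := by
  have hceil : 1 ≤ ⌈t * s⌉₊ := Nat.ceil_pos.2 (mul_pos ht hs)
  calc stepFun s m c t = ∑ i ∈ Finset.Icc 1 m, if ⌈t * s⌉₊ = i then c i else 0 :=
        Finset.sum_congr rfl fun i hi => by
          simp only [indicator, mem_Ioc_div_iff_ceil_eq hs (Finset.mem_Icc.1 hi).1]
    _ = _ := by simp [Finset.sum_ite_eq, hceil]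

theorem stepFun_nonneg (hc : ∀ i, 0 ≤ c i) : 0 ≤ stepFun s m c t :=
  Finset.sum_nonneg fun i _ => indicator_nonneg (fun _ _ => hc i) t

end stepFun

theorem sum_Icc_one_natCast (i : ℕ) : ∑ j ∈ Finset.Icc 1 i, (j : ℝ) = i * (i + 1) / 2 := by
  induction i with
  | zero => simp
  | succ k ih =>
    rw [Finset.sum_Icc_succ_top (Nat.le_add_left 1 k), ih]
    push_cast
    ring

theorem exp_neg_div_le_div_add {x y : ℝ} (hx : 0 < x) (hy : 0 ≤ y) :
    exp (-(y / x)) ≤ x / (x + y) := by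
  rw [exp_neg, show x / (x + y) = (y / x + 1)⁻¹ by field_simp; ring]
  exact inv_anti₀ (by positivity) (add_one_le_exp _)

theorem div_add_le_exp_neg_div {x y : ℝ} (hxy : 0 < x + y) :
    x / (x + y) ≤ exp (-(y / (x + y))) := by
  have h : x / (x + y) = -(y / (x + y)) + 1 := by field_simp; ring
  exact h ▸ add_one_le_exp _

noncomputable def a (n i : ℕ) : ℝ := ∏ j ∈ Finset.Icc 1 i, (n : ℝ) / (n + j)

theorem a_nonneg (n i : ℕ) : 0 ≤ a n i :=
  Finset.prod_nonneg fun _ _ => by positivity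

theorem exp_neg_le_a {n : ℕ} (hn : 0 < n) (i : ℕ) :
    exp (-(i * (i + 1) / (2 * n))) ≤ a n i := by
  have hn : (0 : ℝ) < n := by exact_mod_cast hn
  calc exp (-(i * (i + 1) / (2 * n))) = ∏ j ∈ Finset.Icc 1 i, exp (-(j / n)) := by
        rw [← exp_sum, Finset.sum_neg_distrib, ← Finset.sum_div, sum_Icc_one_natCast, div_div]
    _ ≤ a n i := Finset.prod_le_prod (fun _ _ => (exp_pos _).le)
        fun j _ => exp_neg_div_le_div_add hn j.cast_nonneg

theorem a_le_exp_neg (n i : ℕ) : a n i ≤ exp (-(i * (i + 1) / (2 * (n + i)))) := by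
  calc a n i ≤ ∏ j ∈ Finset.Icc 1 i, exp (-(j / (n + j))) :=
        Finset.prod_le_prod (fun _ _ => by positivity) fun j hj =>
          div_add_le_exp_neg_div (by have := (Finset.mem_Icc.1 hj).1; positivity)
    _ ≤ ∏ j ∈ Finset.Icc 1 i, exp (-(j / (n + i))) := by
        refine Finset.prod_le_prod (fun _ _ => by positivity) fun j hj => exp_le_exp.2 ?_
        have hj := Finset.mem_Icc.1 hj
        have hj1 : (1 : ℝ) ≤ j := by exact_mod_cast hj.1
        have hji : (j : ℝ) ≤ i := by exact_mod_cast hj.2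
        gcongr
    _ = exp (-(i * (i + 1) / (2 * (n + i)))) := by
        rw [← exp_sum, Finset.sum_neg_distrib, ← Finset.sum_div, sum_Icc_one_natCast, div_div,
          mul_comm 2]

theorem a_le_exp_neg_sq_div {n i : ℕ} (hi : i ≤ n) : a n i ≤ exp (-(i ^ 2 / (4 * n))) := by
  rcases Nat.eq_zero_or_pos i with rfl | hi_pos
  · simp [a]
  refine (a_le_exp_neg n i).trans (exp_le_exp.2 ?_)
  have hi0 : (0 : ℝ) < i := by exact_mod_cast hi_pos
  have hin : (i : ℝ) ≤ n := by exact_mod_cast hi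
  rw [neg_le_neg_iff, div_le_div_iff₀ (by linarith) (by linarith)]
  nlinarith

theorem tendsto_a_of_tendsto_div_sqrt {r : ℕ → ℕ} {t : ℝ}
    (hr : Tendsto (fun n => (r n : ℝ) / √n) atTop (𝓝 t)) :
    Tendsto (fun n => a n (r n)) atTop (𝓝 (exp (-(t ^ 2 / 2)))) := by
  have hinv : Tendsto (fun n : ℕ => (√n)⁻¹) atTop (𝓝 0) :=
    tendsto_inv_atTop_zero.comp (tendsto_sqrt_atTop.comp tendsto_natCast_atTop_atTop)
  have hsq : ∀ᶠ n : ℕ in atTop, √n ≠ 0 ∧ (n : ℝ) = √n ^ 2 :=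
    (eventually_ge_atTop 1).mono fun n hn =>
      ⟨(sqrt_pos.2 (by exact_mod_cast hn)).ne', (sq_sqrt n.cast_nonneg).symm⟩
  have hlower : Tendsto (fun n => (r n : ℝ) * (r n + 1) / (2 * n)) atTop (𝓝 (t ^ 2 / 2)) := by
    have := (hr.mul (hr.add hinv)).div_const 2
    rw [add_zero, ← sq] at this
    refine this.congr' (hsq.mono fun n ⟨hs, hn⟩ => ?_)
    dsimp only
    -- `set` shields the square roots, so that `rw [hn]` replaces only the bare `n`.
    set s := √(n : ℝ)
    rw [hn]
    field_simp
  have hupper : Tendsto (fun n => (r n : ℝ) * (r n + 1) / (2 * (n + r n))) atTop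
      (𝓝 (t ^ 2 / 2)) := by
    have := hlower.div (tendsto_const_nhds.add (hr.mul hinv)) (by simp : (1 : ℝ) + t * 0 ≠ 0)
    rw [mul_zero, add_zero, div_one] at this
    refine this.congr' (hsq.mono fun n ⟨hs, hn⟩ => ?_)
    simp only [Pi.div_apply]
    set s := √(n : ℝ)
    rw [hn]
    field_simp
  refine tendsto_of_tendsto_of_tendsto_of_le_of_le' ((continuous_exp.tendsto _).comp hlower.neg)
    ((continuous_exp.tendsto _).comp hupper.neg) ?_ (.of_forall fun n => a_le_exp_neg n (r n))
  filter_upwards [eventually_ge_atTop 1] with n hn using exp_neg_le_a hn (r n)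

theorem stepFun_a_le_exp (n : ℕ) (t : ℝ) :
    stepFun √n (n - 1) (a n) t ≤ exp (-4⁻¹ * t ^ 2) := by
  rcases Nat.eq_zero_or_pos n with rfl | hn
  · simp [stepFun, (exp_pos _).le]
  have hs : 0 < √(n : ℝ) := sqrt_pos.2 (by exact_mod_cast hn)
  rcases le_or_gt t 0 with ht | ht
  · rw [stepFun_of_nonpos hs.le ht]
    positivity
  rw [stepFun_of_pos hs ht]
  split_ifs with hi
  · refine (a_le_exp_neg_sq_div (hi.trans (Nat.sub_le n 1))).trans (exp_le_exp.2 ?_)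
    have hceil : t * √n ≤ ⌈t * √n⌉₊ := Nat.le_ceil _
    have hsq : t ^ 2 * n ≤ (⌈t * √n⌉₊ : ℝ) ^ 2 := by
      calc t ^ 2 * n = (t * √n) ^ 2 := by rw [mul_pow, sq_sqrt n.cast_nonneg]
        _ ≤ (⌈t * √n⌉₊ : ℝ) ^ 2 := pow_le_pow_left₀ (by positivity) hceil 2
    rw [neg_mul, neg_le_neg_iff, le_div_iff₀ (by positivity)]
    linarith
  · positivity

theorem tendsto_stepFun_a (t : ℝ) :
    Tendsto (fun n : ℕ => stepFun √n (n - 1) (a n) t) atTop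
      (𝓝 ((Ioi 0).indicator (fun t => exp (-(t ^ 2 / 2))) t)) := by
  have hsqrt : Tendsto (fun n : ℕ => √(n : ℝ)) atTop atTop :=
    tendsto_sqrt_atTop.comp tendsto_natCast_atTop_atTop
  rcases le_or_gt t 0 with ht | ht
  · rw [indicator_of_notMem (by simpa using ht)]
    exact tendsto_const_nhds.congr fun n => (stepFun_of_nonpos (sqrt_nonneg _) ht).symm
  rw [indicator_of_mem (mem_Ioi.2 ht)]
  have hceil : Tendsto (fun n : ℕ => a n ⌈t * √n⌉₊) atTop (𝓝 (exp (-(t ^ 2 / 2)))) :=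
    tendsto_a_of_tendsto_div_sqrt <| (tendsto_nat_ceil_mul_div_atTop ht.le).comp hsqrt
  refine hceil.congr' ?_
  filter_upwards [hsqrt.eventually_ge_atTop (t + 1), eventually_ge_atTop 1] with n hst hn
  have hs : 0 < √(n : ℝ) := by linarith
  have hceil_le : ⌈t * √n⌉₊ ≤ n - 1 := by
    rw [Nat.ceil_le, Nat.cast_sub hn, Nat.cast_one]
    nlinarith [sq_sqrt (n.cast_nonneg : (0 : ℝ) ≤ n)]
  rw [stepFun_of_pos hs ht, if_pos hceil_le]

theorem integral_exp_neg_sq_div_two_Ioi : ∫ t in Ioi 0, exp (-(t ^ 2 / 2)) = √(π / 2) := by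
  have h := integral_gaussian_Ioi 2⁻¹
  simp only [neg_mul, inv_mul_eq_div] at h
  rw [h, div_inv_eq_mul, show π * 2 = 2 ^ 2 * (π / 2) by ring, sqrt_mul (by positivity),
    sqrt_sq zero_le_two]
  ring

end GossipAge

open Filter in
/-- With `a_i^{(n)} = Π_{j=1}^{i} n/(n+j)`, the normalized sum
`(1/√n)·Σ_{i=1}^{n-1} a_i^{(n)}` converges to `√(π/2)` as `n → ∞`. -/
theorem stmt_5 :
    Tendsto (fun n : ℕ =>
        (1 / Real.sqrt n) *
          ∑ i ∈ Finset.Icc 1 (n - 1), ∏ j ∈ Finset.Icc 1 i, (n : ℝ) / (n + j))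
      atTop (nhds (Real.sqrt (Real.pi / 2))) := by
  have hlim := tendsto_integral_of_dominated_convergence (fun t => exp (-4⁻¹ * t ^ 2))
    (fun n => GossipAge.measurable_stepFun.aestronglyMeasurable)
    (integrable_exp_neg_mul_sq (by norm_num))
    (fun n => .of_forall fun t => by
      rw [norm_of_nonneg (GossipAge.stepFun_nonneg (GossipAge.a_nonneg n))]
      exact GossipAge.stepFun_a_le_exp n t)
    (.of_forall GossipAge.tendsto_stepFun_a)
  rw [integral_indicator measurableSet_Ioi, GossipAge.integral_exp_neg_sq_div_two_Ioi] at hlim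
  refine hlim.congr fun n => ?_
  rw [GossipAge.integral_stepFun (sqrt_nonneg _)]
  rfl
end

section
/- For b_i^{(k)} = Π_{j=1}^{i} k/(k + j λ_c/λ) with fixed positive λ_c, λ, one has (1/√k)·Σ_{i=1}^{k−1} b_i^{(k)} → √(π λ /(2 λ_c)) as k → ∞, and b_{k−1}^{(k)} → 0. -/
/-!
With `c = λ_c/λ` each factor of `b_i^{(k)}` is `(1 + t)⁻¹` for `t = j c / k`, and
`exp (-t) ≤ (1 + t)⁻¹ ≤ exp (-t / (1 + ε))` for `0 ≤ t ≤ ε`. Summing `t` over `j ≤ i` squeezes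
`b_i^{(k)}` between `exp (-(c/2) (i+1)² / k)` and `exp (-(c / (2(1 + cδ))) i² / k)`
whenever `i ≤ δ k`,
and the crude choice `ε = c` bounds all terms with `δ k < i ≤ k` by `exp (-c δ² k / (2(1 + c)))`.
Comparing the Gaussian sums with integrals gives
`∫_{2/√k}^{(k+1)/√k} e^{-c x²/2} ≤ k^{-1/2} ∑ b_i^{(k)}` and
`k^{-1/2} ∑ b_i^{(k)} ≤ √(π(1 + cδ)/(2c)) + √k e^{-c δ² k/(2(1+c))}`,
and `δ = k^{-1/4}` sends both sides to `√(π/(2c))`.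
-/

open Filter Topology Finset Real

-- `b_i^{(k)}` of the paper, with `c = λ_c / λ`
noncomputable def ringProd (c : ℝ) (k i : ℕ) : ℝ := ∏ j ∈ Icc 1 i, (k : ℝ) / (k + j * c)

lemma exp_neg_le_inv_one_add {t : ℝ} (ht : 0 ≤ t) : exp (-t) ≤ (1 + t)⁻¹ := by
  rw [exp_neg]
  exact inv_anti₀ (by positivity) (by linarith [add_one_le_exp t])

lemma inv_one_add_le_exp_neg_div {t ε : ℝ} (ht : 0 ≤ t) (htε : t ≤ ε) :
    (1 + t)⁻¹ ≤ exp (-(t / (1 + ε))) :=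
  calc (1 + t)⁻¹ = 1 - t / (1 + t) := by field_simp; ring
    _ ≤ exp (-(t / (1 + t))) := one_sub_le_exp_neg _
    _ ≤ exp (-(t / (1 + ε))) := by gcongr

lemma exp_neg_sum_le_prod_inv_one_add {ι : Type*} (s : Finset ι) {t : ι → ℝ}
    (ht : ∀ i ∈ s, 0 ≤ t i) : exp (-∑ i ∈ s, t i) ≤ ∏ i ∈ s, (1 + t i)⁻¹ := by
  rw [← sum_neg_distrib, exp_sum]
  exact prod_le_prod (fun i _ => (exp_pos _).le) fun i hi => exp_neg_le_inv_one_add (ht i hi)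

lemma prod_inv_one_add_le_exp_neg_sum_div {ι : Type*} (s : Finset ι) {t : ι → ℝ} {ε : ℝ}
    (ht : ∀ i ∈ s, 0 ≤ t i ∧ t i ≤ ε) :
    ∏ i ∈ s, (1 + t i)⁻¹ ≤ exp (-(∑ i ∈ s, t i) / (1 + ε)) := by
  rw [neg_div, sum_div, ← sum_neg_distrib, exp_sum]
  exact prod_le_prod (fun i hi => inv_nonneg.2 (by linarith [(ht i hi).1]))
    fun i hi => inv_one_add_le_exp_neg_div (ht i hi).1 (ht i hi).2

lemma sum_Icc_one_natCast (i : ℕ) : ∑ j ∈ Icc 1 i, (j : ℝ) = i * (i + 1) / 2 := by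
  induction i with
  | zero => simp
  | succ n ih =>
    rw [sum_Icc_succ_top (by omega), ih]
    push_cast
    ring

lemma sum_Icc_one_eq_sum_range {M : Type*} [AddCommMonoid M] (f : ℕ → M) (n : ℕ) :
    ∑ i ∈ Icc 1 n, f i = ∑ i ∈ range n, f (i + 1) := by
  rw [range_eq_Ico, sum_Ico_add', ← Ico_add_one_right_eq_Icc, zero_add]

section ringProd

variable {c : ℝ} {k : ℕ}

lemma ringProd_eq_prod_inv (hk : 0 < k) (i : ℕ) :
    ringProd c k i = ∏ j ∈ Icc 1 i, (1 + j * c / k)⁻¹ := by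
  have hk' : (0 : ℝ) < k := by exact_mod_cast hk
  refine prod_congr rfl fun j _ => ?_
  field_simp

lemma sum_Icc_one_mul_div (c : ℝ) (k i : ℕ) :
    ∑ j ∈ Icc 1 i, (j : ℝ) * c / k = c * (i * (i + 1)) / (2 * k) := by
  simp only [mul_div_assoc, ← sum_mul, sum_Icc_one_natCast]
  ring

lemma exp_le_ringProd (hc : 0 ≤ c) (hk : 0 < k) (i : ℕ) :
    exp (-(c / 2 / k) * ((i : ℝ) + 1) ^ 2) ≤ ringProd c k i := by
  rw [ringProd_eq_prod_inv hk]
  refine le_trans ?_ (exp_neg_sum_le_prod_inv_one_add _ fun j _ => by positivity)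
  rw [sum_Icc_one_mul_div, exp_le_exp]
  have : (i : ℝ) * (i + 1) ≤ (i + 1) ^ 2 := by nlinarith
  rw [neg_mul, neg_le_neg_iff, div_div, div_mul_eq_mul_div, mul_comm (2 : ℝ)]
  gcongr

lemma ringProd_le_exp (hc : 0 ≤ c) (hk : 0 < k) {δ : ℝ} (hδ : 0 ≤ δ) {i : ℕ}
    (hi : (i : ℝ) ≤ δ * k) :
    ringProd c k i ≤ exp (-(c / (2 * (1 + c * δ)) / k) * (i : ℝ) ^ 2) := by
  have hk' : (0 : ℝ) < k := by exact_mod_cast hk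
  rw [ringProd_eq_prod_inv hk]
  refine (prod_inv_one_add_le_exp_neg_sum_div (ε := c * δ) _
    fun j hj => ⟨by positivity, ?_⟩).trans ?_
  · have hj : (j : ℝ) ≤ δ * k := le_trans (by exact_mod_cast (mem_Icc.1 hj).2) hi
    rw [div_le_iff₀ hk']
    nlinarith
  · rw [sum_Icc_one_mul_div, exp_le_exp, neg_mul, neg_div, neg_le_neg_iff,
      show c / (2 * (1 + c * δ)) / k * (i : ℝ) ^ 2 = c * i ^ 2 / (2 * k) / (1 + c * δ) by
        field_simp]
    have : (i : ℝ) ^ 2 ≤ i * (i + 1) := by nlinarith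
    gcongr

lemma ringProd_le_exp_of_lt (hc : 0 ≤ c) (hk : 0 < k) {δ : ℝ} (hδ : 0 ≤ δ) {i : ℕ}
    (hδi : δ * k < i) (hik : i ≤ k) :
    ringProd c k i ≤ exp (-(c / (2 * (1 + c))) * δ ^ 2 * k) := by
  have hk' : (0 : ℝ) < k := by exact_mod_cast hk
  refine (ringProd_le_exp hc hk zero_le_one (by simpa using hik)).trans (exp_le_exp.2 ?_)
  rw [mul_one, neg_mul, neg_mul, neg_mul, neg_le_neg_iff,
    show c / (2 * (1 + c)) / k * (i : ℝ) ^ 2 = c / (2 * (1 + c)) * (i ^ 2 / k) by ring, mul_assoc]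
  gcongr
  rw [le_div_iff₀ hk']
  nlinarith [mul_nonneg hδ hk'.le]

end ringProd

section gaussian

variable {β : ℝ}

lemma antitoneOn_exp_neg_mul_sq (hβ : 0 ≤ β) :
    AntitoneOn (fun x : ℝ => exp (-β * x ^ 2)) (Set.Ici 0) := by
  intro x hx y _ hxy
  simp only [exp_le_exp, neg_mul, neg_le_neg_iff]
  gcongr

lemma sum_range_exp_neg_mul_sq_le (hβ : 0 < β) (n : ℕ) :
    ∑ i ∈ range n, exp (-β * ((i : ℝ) + 1) ^ 2) ≤ √(π / β) / 2 := by
  have hsum := ((antitoneOn_exp_neg_mul_sq hβ.le).mono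
    fun x hx => hx.1).sum_le_integral (x₀ := 0) (a := n)
  simp only [zero_add, Nat.cast_add, Nat.cast_one] at hsum
  refine hsum.trans ?_
  rw [← integral_gaussian_Ioi, intervalIntegral.integral_of_le n.cast_nonneg]
  exact MeasureTheory.setIntegral_mono_set (integrable_exp_neg_mul_sq hβ).integrableOn
    (.of_forall fun x => (exp_pos _).le) Set.Ioc_subset_Ioi_self.eventuallyLE

lemma tendsto_intervalIntegral_exp_neg_mul_sq (hβ : 0 < β) {a b : ℕ → ℝ}
    (ha : Tendsto a atTop (𝓝 0)) (hb : Tendsto b atTop atTop) :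
    Tendsto (fun n => ∫ x in a n..b n, exp (-β * x ^ 2)) atTop (𝓝 (√(π / β) / 2)) := by
  have hint : ∀ u v : ℝ, IntervalIntegrable (fun x => exp (-β * x ^ 2)) MeasureTheory.volume u v :=
    fun u v => (by fun_prop : Continuous fun x : ℝ => exp (-β * x ^ 2)).intervalIntegrable u v
  have hlow : Tendsto (fun n => ∫ x in (0 : ℝ)..a n, exp (-β * x ^ 2)) atTop (𝓝 0) := by
    simpa only [Function.comp_def, intervalIntegral.integral_same] using
      ((intervalIntegral.continuous_primitive hint 0).tendsto 0).comp ha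
  have hupp := MeasureTheory.intervalIntegral_tendsto_integral_Ioi 0
    (integrable_exp_neg_mul_sq hβ).integrableOn hb
  rw [integral_gaussian_Ioi] at hupp
  simpa using (hupp.sub hlow).congr fun n =>
    intervalIntegral.integral_interval_sub_left (hint _ _) (hint _ _)

end gaussian

section sums

variable {c : ℝ} {k : ℕ}

lemma integral_le_sum_ringProd_div (hc : 0 ≤ c) (hk : 0 < k) :
    ∫ x in (2 / √k)..((k + 1) / √k), exp (-(c / 2) * x ^ 2)
      ≤ (∑ i ∈ Icc 1 (k - 1), ringProd c k i) / √k := by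
  have hk' : (0 : ℝ) < k := by exact_mod_cast hk
  have hs : 0 < √(k : ℝ) := sqrt_pos.2 hk'
  rw [le_div_iff₀ hs, mul_comm]
  have hriemann := ((antitoneOn_exp_neg_mul_sq (β := c / 2 / k) (by positivity)).mono
    fun x hx => le_trans zero_le_two hx.1).integral_le_sum (x₀ := 2) (a := k - 1)
  have hend : (2 : ℝ) + (k - 1 : ℕ) = k + 1 := by
    rw [Nat.cast_sub hk]
    ring
  have hscale : ∀ x : ℝ, exp (-(c / 2 / k) * x ^ 2) = exp (-(c / 2) * (x / √k) ^ 2) := by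
    intro x
    rw [div_pow, sq_sqrt hk'.le]
    ring_nf
  calc √k * ∫ x in (2 / √k)..((k + 1) / √k), exp (-(c / 2) * x ^ 2)
      = ∫ x in (2 : ℝ)..2 + (k - 1 : ℕ), exp (-(c / 2 / k) * x ^ 2) := by
        simp only [hend, hscale]
        rw [intervalIntegral.integral_comp_div (fun x => exp (-(c / 2) * x ^ 2)) hs.ne',
          smul_eq_mul]
    _ ≤ ∑ i ∈ range (k - 1), exp (-(c / 2 / k) * (2 + i : ℝ) ^ 2) := hriemann
    _ = ∑ i ∈ Icc 1 (k - 1), exp (-(c / 2 / k) * ((i : ℝ) + 1) ^ 2) := by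
        rw [sum_Icc_one_eq_sum_range]
        push_cast
        ring_nf
    _ ≤ ∑ i ∈ Icc 1 (k - 1), ringProd c k i := sum_le_sum fun i _ => exp_le_ringProd hc hk i

lemma sum_ringProd_div_le (hc : 0 < c) (hk : 0 < k) {δ : ℝ} (hδ : 0 ≤ δ) :
    (∑ i ∈ Icc 1 (k - 1), ringProd c k i) / √k
      ≤ √(π / (c / (2 * (1 + c * δ)))) / 2 + √k * exp (-(c / (2 * (1 + c))) * δ ^ 2 * k) := by
  have hk' : (0 : ℝ) < k := by exact_mod_cast hk
  set β := c / (2 * (1 + c * δ))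
  set E := exp (-(c / (2 * (1 + c))) * δ ^ 2 * k)
  have hβ : 0 < β := by positivity
  have hhead : ∑ i ∈ Icc 1 (k - 1) with ((i : ℕ) : ℝ) ≤ δ * k, ringProd c k i
      ≤ √k * (√(π / β) / 2) :=
    calc _ ≤ ∑ i ∈ Icc 1 (k - 1) with ((i : ℕ) : ℝ) ≤ δ * k, exp (-(β / k) * (i : ℝ) ^ 2) :=
          sum_le_sum fun i hi => ringProd_le_exp hc.le hk hδ (mem_filter.1 hi).2
      _ ≤ ∑ i ∈ Icc 1 (k - 1), exp (-(β / k) * (i : ℝ) ^ 2) :=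
          sum_le_sum_of_subset_of_nonneg (filter_subset _ _) fun _ _ _ => (exp_pos _).le
      _ = ∑ i ∈ range (k - 1), exp (-(β / k) * ((i : ℝ) + 1) ^ 2) := by
          rw [sum_Icc_one_eq_sum_range]
          push_cast
          rfl
      _ ≤ √(π / (β / k)) / 2 := sum_range_exp_neg_mul_sq_le (by positivity) _
      _ = √k * (√(π / β) / 2) := by
          rw [div_div_eq_mul_div, mul_comm π, mul_div_assoc, sqrt_mul hk'.le, mul_div_assoc]
  have htail : ∑ i ∈ Icc 1 (k - 1) with ¬((i : ℕ) : ℝ) ≤ δ * k, ringProd c k i ≤ k * E := by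
    refine (sum_le_card_nsmul _ _ E fun i hi => ?_).trans ?_
    · obtain ⟨hi, hδi⟩ := mem_filter.1 hi
      exact ringProd_le_exp_of_lt hc.le hk hδ (not_le.1 hδi) (by have := (mem_Icc.1 hi).2; omega)
    · rw [nsmul_eq_mul]
      gcongr
      exact (card_filter_le _ _).trans (by simp)
  rw [← sum_filter_add_sum_filter_not _ (fun i : ℕ => (i : ℝ) ≤ δ * k),
    div_le_iff₀ (by positivity)]
  calc _ ≤ √k * (√(π / β) / 2) + k * E := add_le_add hhead htail
    _ = (√(π / β) / 2 + √k * E) * √k := by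
        rw [add_mul, mul_assoc, mul_comm E, ← mul_assoc, mul_self_sqrt hk'.le]
        ring

end sums

lemma tendsto_sqrt_mul_exp_neg_mul_sqrt {a : ℝ} (ha : 0 < a) :
    Tendsto (fun k : ℕ => √k * exp (-a * √k)) atTop (𝓝 0) := by
  simpa [Function.comp_def] using (tendsto_rpow_mul_exp_neg_mul_atTop_nhds_zero 1 a ha).comp
    (tendsto_sqrt_atTop.comp tendsto_natCast_atTop_atTop)

section limits

variable {c : ℝ}

lemma tendsto_sum_ringProd_div_sqrt (hc : 0 < c) :
    Tendsto (fun k : ℕ => (∑ i ∈ Icc 1 (k - 1), ringProd c k i) / √k) atTop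
      (𝓝 (√(π / (c / 2)) / 2)) := by
  have hsqrt : Tendsto (fun k : ℕ => √(k : ℝ)) atTop atTop :=
    tendsto_sqrt_atTop.comp tendsto_natCast_atTop_atTop
  have hright : Tendsto (fun k : ℕ => ((k : ℝ) + 1) / √k) atTop atTop := by
    refine tendsto_atTop_mono (fun k => ?_) hsqrt
    calc √(k : ℝ) = k / √k := div_sqrt.symm
      _ ≤ (k + 1) / √k := by gcongr; linarith
  have hlower := tendsto_intervalIntegral_exp_neg_mul_sq (β := c / 2) (by positivity)
    (by simpa [div_eq_mul_inv] using hsqrt.inv_tendsto_atTop.const_mul 2) hright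
  -- `δ k = k ^ (-1/4)` tends to `0` while `δ k ^ 2 * k = √k` still tends to `∞`
  set δ : ℕ → ℝ := fun k => (√√(k : ℝ))⁻¹
  have hδ : Tendsto δ atTop (𝓝 0) := (tendsto_sqrt_atTop.comp hsqrt).inv_tendsto_atTop
  have hδk : ∀ k : ℕ, δ k ^ 2 * k = √k := fun k => by
    rw [inv_pow, sq_sqrt (sqrt_nonneg _), inv_mul_eq_div, div_sqrt]
  have hupper : Tendsto (fun k : ℕ => √(π / (c / (2 * (1 + c * δ k)))) / 2
      + √k * exp (-(c / (2 * (1 + c))) * δ k ^ 2 * k)) atTop (𝓝 (√(π / (c / 2)) / 2)) := by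
    have hcont : ContinuousAt (fun d : ℝ => √(π / (c / (2 * (1 + c * d)))) / 2) 0 := by
      fun_prop (disch := simp [hc.ne'])
    have htail := tendsto_sqrt_mul_exp_neg_mul_sqrt (a := c / (2 * (1 + c))) (by positivity)
    simp only [mul_assoc _ (δ _ ^ 2), hδk]
    simpa using (hcont.tendsto.comp hδ).add htail
  refine tendsto_of_tendsto_of_tendsto_of_le_of_le' hlower hupper ?_ ?_
  · filter_upwards [eventually_gt_atTop 0] with k hk
    exact integral_le_sum_ringProd_div hc.le hk
  · filter_upwards [eventually_gt_atTop 0] with k hk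
    exact sum_ringProd_div_le hc hk (by positivity)

lemma tendsto_ringProd_sub_one (hc : 0 < c) :
    Tendsto (fun k : ℕ => ringProd c k (k - 1)) atTop (𝓝 0) := by
  have hexp : Tendsto (fun k : ℕ => exp (-(c / (2 * (1 + c))) * (1 / 2) ^ 2 * k)) atTop (𝓝 0) :=
    tendsto_exp_atBot.comp <| tendsto_natCast_atTop_atTop.const_mul_atTop_of_neg (by
      have : 0 < c / (2 * (1 + c)) := by positivity
      nlinarith)
  refine squeeze_zero' (.of_forall fun k => ?_) ?_ hexp
  · exact prod_nonneg fun j _ => by positivity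
  · filter_upwards [eventually_ge_atTop 3] with k hk
    refine ringProd_le_exp_of_lt hc.le (by omega) (by norm_num) ?_ (by omega)
    rw [Nat.cast_sub (by omega)]
    have : (3 : ℝ) ≤ k := by exact_mod_cast hk
    push_cast
    linarith

end limits

open Filter in
/-- For `b_i^{(k)} = Π_{j=1}^{i} k/(k + jλc/λ)` with fixed `λc, λ > 0`:
`(1/√k)·Σ_{i=1}^{k-1} b_i^{(k)} → √(πλ/(2λc))` and `b_{k-1}^{(k)} → 0` as `k → ∞`. -/
theorem stmt_8 (lamC lam : ℝ) (hC : 0 < lamC) (hl : 0 < lam) :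
    Tendsto (fun k : ℕ =>
        (1 / Real.sqrt k) *
          ∑ i ∈ Finset.Icc 1 (k - 1),
            ∏ j ∈ Finset.Icc 1 i, (k : ℝ) / (k + j * lamC / lam))
      atTop (nhds (Real.sqrt (Real.pi * lam / (2 * lamC)))) ∧
    Tendsto (fun k : ℕ =>
        ∏ j ∈ Finset.Icc 1 (k - 1), (k : ℝ) / (k + j * lamC / lam))
      atTop (nhds 0) := by
  have hc : 0 < lamC / lam := div_pos hC hl
  have hprod : ∀ k i : ℕ,
      ∏ j ∈ Icc 1 i, (k : ℝ) / (k + j * lamC / lam) = ringProd (lamC / lam) k i :=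
    fun k i => by simp only [ringProd, mul_div_assoc]
  have hlimit : √(π * lam / (2 * lamC)) = √(π / (lamC / lam / 2)) / 2 := by
    rw [show π / (lamC / lam / 2) = π * lam / (2 * lamC) * 2 ^ 2 by field_simp,
      sqrt_mul (by positivity), sqrt_sq zero_le_two, mul_div_cancel_right₀ _ two_ne_zero]
  simp only [hprod, hlimit, one_div_mul_eq_div]
  exact ⟨tendsto_sum_ringProd_div_sqrt hc, tendsto_ringProd_sub_one hc⟩
end

section
/- In a clustered network with fully connected clusters and λ_c = λ, the version age of a single node satisfies the two-sided bound ((k−1)² + k)/k² · Δ_c + (λ_e/λ)·((k−1)/k · Σ_{ℓ=1}^{k−1} 1/ℓ + 1/k) ≤ Δ_{S_1} ≤ Δ_c + (λ_e/λ)·Σ_{ℓ=1}^{k} 1/ℓ, where Δ_c = m λ_e/λ_s. -/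
/-! Put `Δ_{S_j} = Δ_c + (λ_e/λ) x_j`. Then `x_k = 1` and
`x_j = (1 + β_j x_{j+1}) / (α_j + β_j)` with `α_j = j/k` and `β_j = j(k-j)/(k-1)`. This map is
increasing, so by backward induction `x` lies between any sub- and supersolution of the recursion
that equal `1` at `j = k`. Changing one rate slightly (`k - 1` to `k` in `β_j`, or `k` to `k - 1`
in `α_j`) gives recursions with explicit harmonic-sum solutions, and these are a super- and a
subsolution. At `j = 1` they give the two bounds, since the coefficient `((k-1)^2+k)/k^2` of `Δ_c`
is at most `1`. -/

open Finset

theorem mem_Icc_of_backward_recursion {α : Type*} [Preorder α] {f : ℕ → α → α} {a n : ℕ}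
    {x y w : ℕ → α} (hf : ∀ j, a ≤ j → j < n → Monotone (f j))
    (hx : ∀ j, a ≤ j → j < n → x j = f j (x (j + 1)))
    (hy : ∀ j, a ≤ j → j < n → y j ≤ f j (y (j + 1)))
    (hw : ∀ j, a ≤ j → j < n → f j (w (j + 1)) ≤ w j)
    (hn : x n ∈ Set.Icc (y n) (w n)) {j : ℕ} (haj : a ≤ j) (hjn : j ≤ n) :
    x j ∈ Set.Icc (y j) (w j) := by
  induction hjn using Nat.decreasingInduction with
  | self => exact hn
  | of_succ j hj ih =>
    obtain ⟨hlow, hup⟩ := ih (by omega)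
    rw [hx j haj hj]
    exact ⟨(hy j haj hj).trans (hf j haj hj hlow), (hf j haj hj hup).trans (hw j haj hj)⟩

lemma one_add_mul_div_le {α β β' u v : ℝ} (hpos : 0 < α + β)
    (hexact : 1 + β' * u = (α + β') * v) (hβ : β' ≤ β) (huv : u ≤ v) :
    (1 + β * u) / (α + β) ≤ v := by
  rw [div_le_iff₀ hpos]
  nlinarith [mul_nonneg (sub_nonneg.2 hβ) (sub_nonneg.2 huv)]

lemma le_one_add_mul_div {α α' β u v : ℝ} (hpos : 0 < α + β)
    (hexact : 1 + β * u = (α' + β) * v) (hα : α ≤ α') (hv : 0 ≤ v) :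
    v ≤ (1 + β * u) / (α + β) := by
  rw [le_div_iff₀ hpos]
  nlinarith [mul_nonneg (sub_nonneg.2 hα) hv]

noncomputable def tailHarmonic (j k : ℕ) : ℝ := ∑ l ∈ Icc j k, (1 : ℝ) / l

lemma tailHarmonic_nonneg (j k : ℕ) : 0 ≤ tailHarmonic j k :=
  sum_nonneg fun _ _ => by positivity

lemma tailHarmonic_self (k : ℕ) : tailHarmonic k k = 1 / k := by
  simp [tailHarmonic]

lemma tailHarmonic_eq_add {j k : ℕ} (h : j ≤ k) :
    tailHarmonic j k = 1 / j + tailHarmonic (j + 1) k := by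
  rw [tailHarmonic, ← insert_Icc_add_one_left_eq_Icc h, sum_insert (by simp)]
  rfl

lemma tailHarmonic_succ_le {j k : ℕ} (h : j ≤ k) :
    tailHarmonic (j + 1) k ≤ (k - j) / (j + 1) := by
  calc tailHarmonic (j + 1) k ≤ #(Icc (j + 1) k) • (1 / ((j : ℝ) + 1)) := by
        refine sum_le_card_nsmul _ _ _ fun l hl => ?_
        have : (j : ℝ) + 1 ≤ l := by exact_mod_cast (mem_Icc.1 hl).1
        gcongr
    _ = (k - j) / (j + 1) := by
        rw [Nat.card_Icc, nsmul_eq_mul, Nat.cast_sub (by omega)]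
        push_cast
        ring

noncomputable def headRate (k j : ℕ) : ℝ := j / k

noncomputable def gossipRate (k j : ℕ) : ℝ := j * (k - j) / (k - 1)

noncomputable def ageMap (k j : ℕ) (u : ℝ) : ℝ :=
  (1 + gossipRate k j * u) / (headRate k j + gossipRate k j)

section Rates

variable {k j : ℕ}

lemma gossipRate_nonneg (h : j < k) : 0 ≤ gossipRate k j := by
  have : (j : ℝ) + 1 ≤ k := by exact_mod_cast h
  unfold gossipRate
  exact div_nonneg (mul_nonneg (by positivity) (by linarith)) (by linarith)

lemma headRate_add_gossipRate_pos (hj : 1 ≤ j) (h : j < k) :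
    0 < headRate k j + gossipRate k j :=
  add_pos_of_pos_of_nonneg (div_pos (by exact_mod_cast hj) (by exact_mod_cast (by omega : 0 < k)))
    (gossipRate_nonneg h)

lemma ageMap_monotone (h : j < k) : Monotone (ageMap k j) := by
  intro u v huv
  have hβ := gossipRate_nonneg h
  unfold ageMap
  gcongr
  exact add_nonneg (div_nonneg (by positivity) (by positivity)) hβ

lemma sub_div_eq_ageMap (hj : 1 ≤ j) (hjk : j < k) {lamE lam Δc D D' : ℝ}
    (hE : lamE ≠ 0) (hl : lam ≠ 0)
    (hD : D = (lamE + ((j : ℝ) * lam / k) * Δc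
          + ((j : ℝ) * ((k : ℝ) - j) * lam / ((k : ℝ) - 1)) * D')
        / ((j : ℝ) * lam / k + (j : ℝ) * ((k : ℝ) - j) * lam / ((k : ℝ) - 1))) :
    (D - Δc) / (lamE / lam) = ageMap k j ((D' - Δc) / (lamE / lam)) := by
  have hden := (headRate_add_gossipRate_pos hj hjk).ne'
  have hD' : D = (lamE + lam * headRate k j * Δc + lam * gossipRate k j * D')
      / (lam * (headRate k j + gossipRate k j)) := by
    rw [hD, headRate, gossipRate]; congr 1 <;> ring
  rw [hD', ageMap]
  generalize headRate k j = α, gossipRate k j = β at hden ⊢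
  field_simp
  ring

end Rates

/-- Solves the recursion with gossip rate `j(k-j)/k` exactly. -/
noncomputable def upperAge (k j : ℕ) : ℝ := k * tailHarmonic j k / (k - j + 1)

/-- Solves the recursion with head rate `j/(k-1)` exactly, and equals `1` at `j = k`. -/
noncomputable def lowerAge (k j : ℕ) : ℝ :=
  (k - 1) * (tailHarmonic j k + 1 / (k * (k - 1))) / (k - j + 1)

section Solutions

variable {k j : ℕ}

lemma upperAge_self (hk : k ≠ 0) : upperAge k k = 1 := by
  simp [upperAge, tailHarmonic_self, hk]

lemma lowerAge_self (hk : 2 ≤ k) : lowerAge k k = 1 := by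
  have hk1 : (k : ℝ) - 1 ≠ 0 := by
    have : (2 : ℝ) ≤ k := by exact_mod_cast hk
    linarith
  have hk0 : (k : ℝ) ≠ 0 := by positivity
  rw [lowerAge, tailHarmonic_self]
  field_simp
  ring

lemma upperAge_one (hk : k ≠ 0) : upperAge k 1 = tailHarmonic 1 k := by
  simp [upperAge, hk]

lemma lowerAge_one (hk : 2 ≤ k) :
    lowerAge k 1 = ((k : ℝ) - 1) / k * (∑ l ∈ Icc 1 (k - 1), (1 : ℝ) / l) + 1 / k := by
  have hk1 : (k : ℝ) - 1 ≠ 0 := by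
    have : (2 : ℝ) ≤ k := by exact_mod_cast hk
    linarith
  have hk0 : (k : ℝ) ≠ 0 := by positivity
  obtain ⟨n, rfl⟩ : ∃ n, k = n + 1 := ⟨k - 1, by omega⟩
  rw [lowerAge, tailHarmonic, sum_Icc_succ_top (by omega)]
  simp only [Nat.add_sub_cancel]
  field_simp
  ring

/-- `upperAge k j` is `k` times the mean of `1/l` over `j ≤ l ≤ k`, and such tail means of a
decreasing sequence decrease in `j`. -/
lemma upperAge_succ_le (hj : 1 ≤ j) (hjk : j < k) : upperAge k (j + 1) ≤ upperAge k j := by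
  have hj' : (1 : ℝ) ≤ j := by exact_mod_cast hj
  have hjk' : (j : ℝ) + 1 ≤ k := by exact_mod_cast hjk
  have hT : tailHarmonic (j + 1) k ≤ (k - j) * (1 / j) :=
    (tailHarmonic_succ_le hjk.le).trans <| by
      rw [← div_eq_mul_one_div]
      exact div_le_div_of_nonneg_left (by linarith) (by positivity) (by linarith)
  rw [upperAge, upperAge, tailHarmonic_eq_add hjk.le, div_le_div_iff₀ (by push_cast; linarith)
    (by linarith)]
  push_cast
  nlinarith [mul_le_mul_of_nonneg_left hT (by linarith : (0 : ℝ) ≤ k)]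

lemma ageMap_upperAge_le (hj : 1 ≤ j) (hjk : j < k) :
    ageMap k j (upperAge k (j + 1)) ≤ upperAge k j := by
  have hj' : (1 : ℝ) ≤ j := by exact_mod_cast hj
  have hjk' : (j : ℝ) + 1 ≤ k := by exact_mod_cast hjk
  refine one_add_mul_div_le (β' := j * (k - j) / k) (headRate_add_gossipRate_pos hj hjk) ?_
    (div_le_div_of_nonneg_left (by nlinarith) (by linarith) (by linarith))
    (upperAge_succ_le hj hjk)
  have hkj : (k : ℝ) - j ≠ 0 := by linarith
  have hkj1 : (k : ℝ) - j + 1 ≠ 0 := by linarith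
  have hk : (k : ℝ) ≠ 0 := (by linarith : (0 : ℝ) < k).ne'
  have hj0 : (j : ℝ) ≠ 0 := by positivity
  rw [upperAge, upperAge, tailHarmonic_eq_add hjk.le, headRate]
  push_cast
  rw [show (k : ℝ) - (j + 1) + 1 = k - j by ring]
  field_simp
  ring

lemma lowerAge_le_ageMap (hj : 1 ≤ j) (hjk : j < k) :
    lowerAge k j ≤ ageMap k j (lowerAge k (j + 1)) := by
  have hj' : (1 : ℝ) ≤ j := by exact_mod_cast hj
  have hjk' : (j : ℝ) + 1 ≤ k := by exact_mod_cast hjk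
  refine le_one_add_mul_div (α' := j / (k - 1)) (headRate_add_gossipRate_pos hj hjk) ?_
    (div_le_div_of_nonneg_left (by linarith) (by linarith) (by linarith)) ?_
  · have hkj : (k : ℝ) - j ≠ 0 := by linarith
    have hkj1 : (k : ℝ) - j + 1 ≠ 0 := by linarith
    have hk : (k : ℝ) ≠ 0 := (by linarith : (0 : ℝ) < k).ne'
    have hk1 : (k : ℝ) - 1 ≠ 0 := by linarith
    have hj0 : (j : ℝ) ≠ 0 := by positivity
    rw [lowerAge, lowerAge, tailHarmonic_eq_add hjk.le, gossipRate]
    push_cast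
    rw [show (k : ℝ) - (j + 1) + 1 = k - j by ring]
    field_simp
    ring
  · have := tailHarmonic_nonneg j k
    have hk1 : (0 : ℝ) < k - 1 := by linarith
    unfold lowerAge
    exact div_nonneg (mul_nonneg hk1.le (by positivity)) (by linarith)

end Solutions

/-- Fully connected clusters with `λc = λ`: the single-node version age satisfies
`((k−1)²+k)/k²·Δc + (λe/λ)((k−1)/k·H_{k−1} + 1/k) ≤ Δ_{S_1} ≤ Δc + (λe/λ)·H_k`,
where `Δc = m·λe/λs`. -/
theorem stmt_11 (k : ℕ) (hk : 2 ≤ k) (m lamE lamS lam Δc : ℝ)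
    (hm : 0 < m) (hE : 0 < lamE) (hS : 0 < lamS) (hl : 0 < lam)
    (hΔc : Δc = m * lamE / lamS)
    (Δ : ℕ → ℝ)
    (hrec : ∀ j, 1 ≤ j → j ≤ k - 1 →
      Δ j = (lamE + ((j : ℝ) * lam / k) * Δc
          + ((j : ℝ) * ((k : ℝ) - j) * lam / ((k : ℝ) - 1)) * Δ (j + 1))
        / ((j : ℝ) * lam / k + (j : ℝ) * ((k : ℝ) - j) * lam / ((k : ℝ) - 1)))
    (hbnd : Δ k = Δc + lamE / lam) :
    (((k : ℝ) - 1) ^ 2 + k) / (k : ℝ) ^ 2 * Δc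
        + (lamE / lam) * (((k : ℝ) - 1) / k * (∑ l ∈ Finset.Icc 1 (k - 1), (1 : ℝ) / l)
            + 1 / k)
      ≤ Δ 1 ∧
    Δ 1 ≤ Δc + (lamE / lam) * ∑ l ∈ Finset.Icc 1 k, (1 : ℝ) / l := by
  have hk0 : k ≠ 0 := by omega
  set c := lamE / lam
  have hc : 0 < c := div_pos hE hl
  have hΔ : ∀ j, Δ j = Δc + c * ((Δ j - Δc) / c) := fun j => by field_simp; ring
  obtain ⟨hlow, hup⟩ := mem_Icc_of_backward_recursion (f := ageMap k)
    (x := fun j => (Δ j - Δc) / c) (y := lowerAge k) (w := upperAge k)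
    (fun j _ hjk => ageMap_monotone hjk)
    (fun j hj hjk => sub_div_eq_ageMap hj hjk hE.ne' hl.ne' (hrec j hj (by omega)))
    (fun j hj hjk => lowerAge_le_ageMap hj hjk) (fun j hj hjk => ageMap_upperAge_le hj hjk)
    (by simp [hbnd, hc.ne', lowerAge_self hk, upperAge_self hk0]) le_rfl (by omega)
  have hcoeff : ((k : ℝ) - 1) ^ 2 + k ≤ (k : ℝ) ^ 2 := by
    nlinarith [(show (1 : ℝ) ≤ k by exact_mod_cast (show 1 ≤ k by omega))]
  have hΔc0 : 0 < Δc := by rw [hΔc]; positivity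
  constructor
  · calc _ ≤ Δc + c * lowerAge k 1 := by
          rw [lowerAge_one hk]
          gcongr
          exact mul_le_of_le_one_left hΔc0.le ((div_le_one (by positivity)).2 hcoeff)
      _ ≤ Δ 1 := by rw [hΔ 1]; gcongr
  · calc Δ 1 = Δc + c * ((Δ 1 - Δc) / c) := hΔ 1
      _ ≤ Δc + c * upperAge k 1 := by gcongr
      _ = _ := by rw [upperAge_one hk0, tailHarmonic]
end

section
/- The sequence defined by Δ̂_{S_1} = Δ_c + λ_e/λ and Δ̂_{S_{ℓ+1}} = ( (λ_e/λ)/(k−ℓ) + Δ_c/k + (ℓ/(k−1)) Δ̂_{S_ℓ} ) / (1/k + ℓ/(k−1)) for 1 ≤ ℓ ≤ k−1 satisfies Δ̂_{S_k} ≤ Δ_c + (λ_e/λ)·H_k, where H_k = Σ_{ℓ=1}^k 1/ℓ. -/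
/-!
Write `a = λe/λ` and `E_ℓ = Δ̂_ℓ − Δc`; subtracting `Δc` removes it from the recursion, which becomes
`E_{ℓ+1} = (a/(k−ℓ) + (ℓ/(k−1)) E_ℓ) / (1/k + ℓ/(k−1))`. The map `c ↦ (A + c x)/(1/k + c)` is
antitone as long as `x/k ≤ A`, so replacing `ℓ/(k−1)` by the smaller `ℓ/k` bounds `E_{ℓ+1}` from above
by `(a/(k−ℓ) + (ℓ/k) E_ℓ)/((ℓ+1)/k)`. For `Ẽ_ℓ = (ℓ/k) E_ℓ` this says `Ẽ_{ℓ+1} ≤ a/(k−ℓ) + Ẽ_ℓ`, which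
telescopes to `Ẽ_ℓ ≤ a (1/k + ⋯ + 1/(k−ℓ+1))`; that tail is at most `ℓ/(k−ℓ)`, which is exactly the
side condition `E_ℓ/k ≤ a/(k−ℓ)` needed at the next step. At `ℓ = k` the tail is `H_k`.
-/

open Finset

theorem sum_range_one_div_sub_eq_sum_Icc (k : ℕ) :
    ∑ i ∈ range k, 1 / ((k : ℝ) - i) = ∑ j ∈ Icc 1 k, (1 : ℝ) / j := by
  refine sum_nbij' (k - ·) (k - ·) ?_ ?_ ?_ ?_ ?_
  · intro i hi; simp only [mem_range, mem_Icc] at hi ⊢; omega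
  · intro j hj; simp only [mem_range, mem_Icc] at hj ⊢; omega
  · intro i hi; simp only [mem_range] at hi; omega
  · intro j hj; simp only [mem_Icc] at hj; omega
  · intro i hi; rw [Nat.cast_sub (mem_range.1 hi).le]

theorem sum_range_one_div_sub_le {k l : ℕ} (hlk : l < k) :
    ∑ i ∈ range l, 1 / ((k : ℝ) - i) ≤ l / ((k : ℝ) - l) := by
  have hkl : (0 : ℝ) < k - l := sub_pos.2 (by exact_mod_cast hlk)
  calc ∑ i ∈ range l, 1 / ((k : ℝ) - i) ≤ ∑ _i ∈ range l, 1 / ((k : ℝ) - l) := by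
        refine sum_le_sum fun i hi => one_div_le_one_div_of_le hkl ?_
        have : (i : ℝ) ≤ l := by exact_mod_cast (mem_range.1 hi).le
        linarith
    _ = l / ((k : ℝ) - l) := by rw [sum_const, card_range, nsmul_eq_mul, mul_one_div]

theorem add_mul_div_add_le_of_mul_le {p A x c c' : ℝ} (hp : 0 < p) (hc : 0 ≤ c) (hcc' : c ≤ c')
    (hx : x * p ≤ A) : (A + c' * x) / (p + c') ≤ (A + c * x) / (p + c) := by
  rw [div_le_div_iff₀ (by linarith) (by linarith)]
  nlinarith [mul_nonneg (sub_nonneg.2 hcc') (sub_nonneg.2 hx)]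

theorem add_add_mul_div_add_sub {p c A d y : ℝ} (h : p + c ≠ 0) :
    (A + p * d + c * y) / (p + c) - d = (A + c * (y - d)) / (p + c) := by
  field_simp
  ring

theorem mul_le_harmonic_tail_of_recursion {k : ℕ} {a : ℝ} (ha : 0 ≤ a) {E : ℕ → ℝ}
    (h1 : E 1 = a)
    (hrec : ∀ l, 1 ≤ l → l + 1 ≤ k →
      E (l + 1) = (a / ((k : ℝ) - l) + ((l : ℝ) / ((k : ℝ) - 1)) * E l)
        / (1 / (k : ℝ) + (l : ℝ) / ((k : ℝ) - 1))) :
    ∀ l, 1 ≤ l → l ≤ k → ((l : ℝ) / k) * E l ≤ a * ∑ i ∈ range l, 1 / ((k : ℝ) - i) := by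
  intro l hl
  induction l, hl using Nat.le_induction with
  | base => intro _; simp [h1, mul_comm]
  | succ l hl ih =>
    intro hlk
    have hl' : (1 : ℝ) ≤ l := by exact_mod_cast hl
    have hlk' : (l : ℝ) + 1 ≤ k := by exact_mod_cast hlk
    have hk : (0 : ℝ) < k := by linarith
    have hkl : (0 : ℝ) < k - l := by linarith
    specialize ih (by omega)
    have hE : E l * (1 / k) ≤ a / (k - l) := by
      have := ih.trans (mul_le_mul_of_nonneg_left (sum_range_one_div_sub_le (by omega)) ha)
      have hl0 : (0 : ℝ) < l := by linarith
      refine le_of_mul_le_mul_left ?_ hl0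
      convert this using 1 <;> field_simp
    have hcmp : E (l + 1) ≤ (a / (k - l) + (l / k) * E l) / (1 / k + l / k) := by
      rw [hrec l hl hlk]
      exact add_mul_div_add_le_of_mul_le (by positivity) (by positivity)
        (div_le_div_of_nonneg_left (by positivity) (by linarith) (by linarith)) hE
    calc ((l + 1 : ℕ) : ℝ) / k * E (l + 1)
        ≤ ((l + 1 : ℕ) : ℝ) / k * ((a / (k - l) + (l / k) * E l) / (1 / k + l / k)) := by gcongr
      _ = a / (k - l) + (l / k) * E l := by push_cast; field_simp; ring
      _ ≤ a * ∑ i ∈ range (l + 1), 1 / ((k : ℝ) - i) := by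
          rw [sum_range_succ, mul_add, mul_one_div]; linarith

theorem stmt_12_general (k : ℕ) (hk : 2 ≤ k) (lamE lam Δc : ℝ)
    (hE : 0 < lamE) (hl : 0 < lam)
    (Δhat : ℕ → ℝ)
    (h1 : Δhat 1 = Δc + lamE / lam)
    (hrec : ∀ l, 1 ≤ l → l ≤ k - 1 →
      Δhat (l + 1) = ((lamE / lam) / ((k : ℝ) - l) + Δc / k
          + ((l : ℝ) / ((k : ℝ) - 1)) * Δhat l)
        / (1 / (k : ℝ) + (l : ℝ) / ((k : ℝ) - 1))) :
    Δhat k ≤ Δc + (lamE / lam) * ∑ l ∈ Finset.Icc 1 k, (1 : ℝ) / l := by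
  have hk' : (2 : ℝ) ≤ k := by exact_mod_cast hk
  have hrec' : ∀ l, 1 ≤ l → l + 1 ≤ k →
      Δhat (l + 1) - Δc = (lamE / lam / ((k : ℝ) - l) + ((l : ℝ) / ((k : ℝ) - 1)) * (Δhat l - Δc))
        / (1 / (k : ℝ) + (l : ℝ) / ((k : ℝ) - 1)) := by
    intro l hl1 hlk
    have hden : 0 < 1 / (k : ℝ) + l / ((k : ℝ) - 1) :=
      add_pos_of_pos_of_nonneg (by positivity) (div_nonneg (by positivity) (by linarith))
    rw [hrec l hl1 (by omega), ← add_add_mul_div_add_sub hden.ne']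
    ring
  have hbound := mul_le_harmonic_tail_of_recursion (div_nonneg hE.le hl.le) (E := (Δhat · - Δc))
    (by simp [h1]) hrec' k (by omega) le_rfl
  rw [div_self (by positivity), one_mul, sum_range_one_div_sub_eq_sum_Icc] at hbound
  linarith

/-- The reversed-index recursion for the fully connected cluster with `λc = λ`:
`Δ̂_1 = Δc + λe/λ`, `Δ̂_{ℓ+1} = ((λe/λ)/(k−ℓ) + Δc/k + (ℓ/(k−1))Δ̂_ℓ)/(1/k + ℓ/(k−1))`
for `1 ≤ ℓ ≤ k−1`, satisfies `Δ̂_k ≤ Δc + (λe/λ)·H_k`. -/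
theorem stmt_12 (k : ℕ) (hk : 2 ≤ k) (lamE lam Δc : ℝ)
    (hE : 0 < lamE) (hl : 0 < lam) (hΔc : 0 ≤ Δc)
    (Δhat : ℕ → ℝ)
    (h1 : Δhat 1 = Δc + lamE / lam)
    (hrec : ∀ l, 1 ≤ l → l ≤ k - 1 →
      Δhat (l + 1) = ((lamE / lam) / ((k : ℝ) - l) + Δc / k
          + ((l : ℝ) / ((k : ℝ) - 1)) * Δhat l)
        / (1 / (k : ℝ) + (l : ℝ) / ((k : ℝ) - 1))) :
    Δhat k ≤ Δc + (lamE / lam) * ∑ l ∈ Finset.Icc 1 k, (1 : ℝ) / l :=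
  stmt_12_general k hk lamE lam Δc hE hl Δhat h1 hrec
end

section
/- The solution of the backward recursion Δ_j = (λ_e + r_j Δ_c + s Δ_{j+1})/(r_j + s) for j = 1,…,k−1 with constant s > 0, r_j = j·r > 0, and boundary value Δ_k, admits the closed form Δ_1 = (λ_e/s)·Σ_{i=1}^{k−1} Π_{j=1}^{i} s/(s + j r) + Δ_c·(1 − Π_{j=1}^{k−1} s/(s+jr)) + Δ_k·Π_{j=1}^{k−1} s/(s+jr). -/
/-! Subtracting `Δc` turns the recursion into `E_j = q_j (λe/s + E_{j+1})` for `E_j = Δ_j − Δc`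
and `q_j = s/(s + j r)`, a first-order affine recursion whose solution is read off by unrolling
it from `j = 1` up to `j = k`. -/

open Finset

theorem eq_sum_prod_of_eq_mul_add {R : Type*} [CommSemiring R] (q x : ℕ → R) (b : R)
    {m n : ℕ} (hmn : m ≤ n) (hx : ∀ j ∈ Ico m n, x j = q j * (b + x (j + 1))) :
    x m = b * ∑ i ∈ Ico m n, ∏ j ∈ Icc m i, q j + x n * ∏ j ∈ Ico m n, q j := by
  induction n, hmn using Nat.le_induction with
  | base => simp
  | succ n hmn ih =>
    have hxn : x n = q n * (b + x (n + 1)) := hx n (by simp [hmn])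
    have hprod : ∏ j ∈ Icc m n, q j = (∏ j ∈ Ico m n, q j) * q n := by
      rw [← Finset.Ico_add_one_right_eq_Icc, prod_Ico_succ_top hmn]
    rw [ih fun j hj => hx j (Ico_subset_Ico_right n.le_succ hj), sum_Ico_succ_top hmn,
      prod_Ico_succ_top hmn, hprod, hxn]
    ring

theorem add_mul_add_mul_div_sub_eq {K : Type*} [Field K] {e a c s y : K} (hs : s ≠ 0)
    (has : a + s ≠ 0) :
    (e + a * c + s * y) / (a + s) - c = s / (s + a) * (e / s + (y - c)) := by
  rw [add_comm s a]
  field_simp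
  ring

theorem stmt_15_general (k : ℕ) (hk : 2 ≤ k) (lamE r s Δc : ℝ)
    (hr : 0 < r) (hs : 0 < s)
    (Δ : ℕ → ℝ)
    (hrec : ∀ j, 1 ≤ j → j ≤ k - 1 →
      Δ j = (lamE + (j : ℝ) * r * Δc + s * Δ (j + 1)) / ((j : ℝ) * r + s)) :
    Δ 1 = (lamE / s) *
        (∑ i ∈ Finset.Icc 1 (k - 1), ∏ j ∈ Finset.Icc 1 i, s / (s + j * r))
      + Δc * (1 - ∏ j ∈ Finset.Icc 1 (k - 1), s / (s + j * r))
      + Δ k * ∏ j ∈ Finset.Icc 1 (k - 1), s / (s + j * r) := by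
  have hIcc : Icc 1 (k - 1) = Ico 1 k := by
    rw [← Finset.Ico_add_one_right_eq_Icc, Nat.sub_add_cancel (by omega)]
  have hshift : ∀ j ∈ Ico 1 k,
      Δ j - Δc = s / (s + j * r) * (lamE / s + (Δ (j + 1) - Δc)) := by
    intro j hj
    obtain ⟨hj1, hjk⟩ := mem_Ico.mp hj
    rw [hrec j hj1 (by omega)]
    exact add_mul_add_mul_div_sub_eq hs.ne' (by positivity)
  have hsol := eq_sum_prod_of_eq_mul_add (fun j : ℕ => s / (s + j * r)) (fun j => Δ j - Δc)
    (lamE / s) (by omega) hshift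
  rw [hIcc]
  linear_combination hsol

/-- Closed form for the backward recursion
`Δ_j = (λe + j·r·Δc + s·Δ_{j+1})/(j·r + s)`, `j = 1,…,k−1`, with boundary `Δ_k`:
`Δ_1 = (λe/s)·Σ_{i=1}^{k−1} Π_{j=1}^{i} s/(s+jr) + Δc·(1 − Π_{j=1}^{k−1} s/(s+jr))
 + Δ_k·Π_{j=1}^{k−1} s/(s+jr)`. -/
theorem stmt_15 (k : ℕ) (hk : 2 ≤ k) (lamE r s Δc : ℝ)
    (hE : 0 < lamE) (hr : 0 < r) (hs : 0 < s)
    (Δ : ℕ → ℝ)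
    (hrec : ∀ j, 1 ≤ j → j ≤ k - 1 →
      Δ j = (lamE + (j : ℝ) * r * Δc + s * Δ (j + 1)) / ((j : ℝ) * r + s)) :
    Δ 1 = (lamE / s) *
        (∑ i ∈ Finset.Icc 1 (k - 1), ∏ j ∈ Finset.Icc 1 i, s / (s + j * r))
      + Δc * (1 - ∏ j ∈ Finset.Icc 1 (k - 1), s / (s + j * r))
      + Δ k * ∏ j ∈ Finset.Icc 1 (k - 1), s / (s + j * r) :=
  stmt_15_general k hk lamE r s Δc hr hs Δ hrec
end

section
/- The harmonic-sum lower bound in the fully connected cluster: the sequence defined by the recursion (12) with λ_c = λ satisfies Δ_{S_1} ≥ ((k−1)²+k)/k² · Δ_c + (λ_e/λ)((k−1)/k · H_{k−1} + 1/k), which is at least Δ_c·(1 − 1/k) + (λ_e/λ)(1 − 1/k)·H_{k−1}; hence Δ_{S_1} = Ω(Δ_c + (λ_e/λ)log k). -/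
/-!
Write `r = λe/λ`. Subtracting `Δc` from both sides, the recursion reads
`Δ_j − Δc = (λe + q_j (Δ_{j+1} − Δc)) / (jλ/k + q_j)` with `q_j = j(k−j)λ/(k−1)`.
Bounding the denominator by `jλ(k−j+1)/(k−1)` and inducting downwards from `j = k` gives
`Δ_j ≥ Δc + r (1 + (k−1) ∑_{l=j}^{k−1} 1/l) / (k−j+1)`, which at `j = 1` is the first bound.
The second bound differs from the first by `Δc/k² + r/k ≥ 0`.
-/

open Finset

theorem le_recursion_step {k j lamE lam c X B : ℝ} (hj : 1 ≤ j) (hjk : j < k)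
    (hE : 0 ≤ lamE) (hl : 0 < lam) (hB : 0 ≤ B)
    (hX : c + lamE / lam * B / (k - j) ≤ X) :
    c + lamE / lam * ((k - 1) / j + B) / (k - j + 1) ≤
      (lamE + j * lam / k * c + j * (k - j) * lam / (k - 1) * X)
        / (j * lam / k + j * (k - j) * lam / (k - 1)) := by
  have hk1 : 0 < k - 1 := by linarith
  have hkj : 0 < k - j := by linarith
  set q := j * (k - j) * lam / (k - 1)
  set D := j * lam / k + q
  have hD : 0 < D := by
    have : 0 < k := by linarith
    positivity
  have hD' : D ≤ j * lam * (k - j + 1) / (k - 1) := by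
    have : j * lam / k ≤ j * lam / (k - 1) :=
      div_le_div_of_nonneg_left (by positivity) hk1 (by linarith)
    calc D ≤ j * lam / (k - 1) + q := add_le_add_left this q
      _ = _ := by simp only [q]; ring
  have hnum0 : 0 ≤ lamE + q * (lamE / lam * B / (k - j)) := by positivity
  calc c + lamE / lam * ((k - 1) / j + B) / (k - j + 1)
      = c + (lamE + q * (lamE / lam * B / (k - j))) / (j * lam * (k - j + 1) / (k - 1)) := by
        simp only [q]; field_simp
    _ ≤ c + (lamE + q * (lamE / lam * B / (k - j))) / D := by gcongr
    _ ≤ c + (lamE + q * (X - c)) / D := by gcongr; linarith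
    _ = (lamE + j * lam / k * c + q * X) / D := by field_simp; ring

theorem le_of_recursion {k : ℕ} {lamE lam Δc : ℝ} (hE : 0 ≤ lamE) (hl : 0 < lam) {Δ : ℕ → ℝ}
    (hrec : ∀ j, 1 ≤ j → j ≤ k - 1 →
      Δ j = (lamE + ((j : ℝ) * lam / k) * Δc
          + ((j : ℝ) * ((k : ℝ) - j) * lam / ((k : ℝ) - 1)) * Δ (j + 1))
        / ((j : ℝ) * lam / k + (j : ℝ) * ((k : ℝ) - j) * lam / ((k : ℝ) - 1)))
    (hbnd : Δ k = Δc + lamE / lam) {j : ℕ} (hj : 1 ≤ j) (hjk : j ≤ k) :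
    Δc + lamE / lam * (1 + ((k : ℝ) - 1) * ∑ l ∈ Icc j (k - 1), (1 : ℝ) / l) / ((k : ℝ) - j + 1)
      ≤ Δ j := by
  induction hjk using Nat.decreasingInduction with
  | self => simp [Icc_eq_empty_of_lt (Nat.sub_lt (hj.trans_lt' zero_lt_one) one_pos), hbnd]
  | of_succ j hjk ih =>
    have hS : ∑ l ∈ Icc j (k - 1), (1 : ℝ) / l = 1 / j + ∑ l ∈ Icc (j + 1) (k - 1), (1 : ℝ) / l := by
      rw [← insert_Icc_add_one_left_eq_Icc (by omega), sum_insert (by simp)]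
    have hjk' : (j : ℝ) < k := by exact_mod_cast hjk
    have hgap : (k : ℝ) - ((j + 1 : ℕ) : ℝ) + 1 = k - j := by push_cast; ring
    have hX := ih (by omega)
    rw [hgap] at hX
    have hB : 0 ≤ 1 + ((k : ℝ) - 1) * ∑ l ∈ Icc (j + 1) (k - 1), (1 : ℝ) / l := by
      have : (1 : ℝ) ≤ k := by exact_mod_cast hjk.le.trans' hj
      have : 0 ≤ ∑ l ∈ Icc (j + 1) (k - 1), (1 : ℝ) / l := sum_nonneg fun _ _ => by positivity
      nlinarith
    rw [hrec j hj (by omega)]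
    calc _ = Δc + lamE / lam * (((k : ℝ) - 1) / j
              + (1 + ((k : ℝ) - 1) * ∑ l ∈ Icc (j + 1) (k - 1), (1 : ℝ) / l)) / (k - j + 1) := by
          rw [hS]; ring
      _ ≤ _ := le_recursion_step (by exact_mod_cast hj) hjk' hE hl hB hX

/-- Lower bound for the fully connected cluster with `λc = λ`:
`Δ_{S_1} ≥ ((k−1)²+k)/k²·Δc + (λe/λ)((k−1)/k·H_{k−1} + 1/k)`, which is at least
`Δc·(1 − 1/k) + (λe/λ)(1 − 1/k)·H_{k−1}`. -/
theorem stmt_17 (k : ℕ) (hk : 2 ≤ k) (lamE lam Δc : ℝ)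
    (hE : 0 < lamE) (hl : 0 < lam) (hΔc : 0 ≤ Δc)
    (Δ : ℕ → ℝ)
    (hrec : ∀ j, 1 ≤ j → j ≤ k - 1 →
      Δ j = (lamE + ((j : ℝ) * lam / k) * Δc
          + ((j : ℝ) * ((k : ℝ) - j) * lam / ((k : ℝ) - 1)) * Δ (j + 1))
        / ((j : ℝ) * lam / k + (j : ℝ) * ((k : ℝ) - j) * lam / ((k : ℝ) - 1)))
    (hbnd : Δ k = Δc + lamE / lam) :
    (((k : ℝ) - 1) ^ 2 + k) / (k : ℝ) ^ 2 * Δc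
        + (lamE / lam) * (((k : ℝ) - 1) / k * (∑ l ∈ Finset.Icc 1 (k - 1), (1 : ℝ) / l)
            + 1 / k)
      ≤ Δ 1 ∧
    Δc * (1 - 1 / k) + (lamE / lam) * (1 - 1 / k)
        * (∑ l ∈ Finset.Icc 1 (k - 1), (1 : ℝ) / l)
      ≤ (((k : ℝ) - 1) ^ 2 + k) / (k : ℝ) ^ 2 * Δc
        + (lamE / lam) * (((k : ℝ) - 1) / k * (∑ l ∈ Finset.Icc 1 (k - 1), (1 : ℝ) / l)
            + 1 / k) := by
  have hk0 : (0 : ℝ) < k := by positivity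
  have hbound := le_of_recursion hE.le hl hrec hbnd le_rfl (by omega)
  set H := ∑ l ∈ Icc 1 (k - 1), (1 : ℝ) / l
  set r := lamE / lam
  have hbound' : Δc + r * (((k : ℝ) - 1) / k * H + 1 / k) ≤ Δ 1 := by
    rw [Nat.cast_one, sub_add_cancel] at hbound
    linarith [show r * (1 + ((k : ℝ) - 1) * H) / k = r * (((k : ℝ) - 1) / k * H + 1 / k) by ring]
  have hgap : Δc * (1 - 1 / k) + r * (1 - 1 / k) * H + (Δc / (k : ℝ) ^ 2 + r / k)
      = (((k : ℝ) - 1) ^ 2 + k) / (k : ℝ) ^ 2 * Δc + r * (((k : ℝ) - 1) / k * H + 1 / k) := by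
    field_simp; ring
  refine ⟨?_, by linarith [show 0 ≤ Δc / (k : ℝ) ^ 2 + r / k by positivity]⟩
  have hcoef_le : (((k : ℝ) - 1) ^ 2 + k) / (k : ℝ) ^ 2 ≤ 1 := by
    rw [div_le_one (by positivity)]
    nlinarith [(Nat.ofNat_le_cast (α := ℝ)).2 hk]
  linarith [mul_le_of_le_one_left hΔc hcoef_le]
end
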